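/- If σ is a strategy on a game A ⊸ B and τ is a strategy on B ⊸ C, then the composite relation—the restriction to moves of A and C of the transitive closure of the union of ≤_σ and ≤_τ—satisfies the polarity condition: whenever m < n in the composite, m is an Opponent move and n is a Proponent move of A ⊸ C. -/

import Mathlib

/-!
Games are given by a type of moves `α`, a polarity function `α → Bool`
(`false` = Opponent = −1, `true` = Proponent = +1) and a well-founded partial
order (the causality order).
-/

/-- Disjoint union of two relations on a sum type. -/
def sumRel {α β : Type*} (r : α → α → Prop) (s : β → β → Prop) :
    α ⊕ β → α ⊕ β → Prop
  | Sum.inl a, Sum.inl a' => r a a'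
  | Sum.inr b, Sum.inr b' => s b b'
  | _, _ => False

/-- The causality order of a game: a well-founded partial order. -/
def IsGame {α : Type*} (le : α → α → Prop) : Prop :=
  (∀ a, le a a) ∧ (∀ a b c, le a b → le b c → le a c) ∧
  (∀ a b, le a b → le b a → a = b) ∧
  WellFounded (fun a b => le a b ∧ a ≠ b)

/-- The polarity function of the arrow game `A ⊸ B = A* ⊗ B`: polarities are
inverted on the left component. -/
def arrowPol {α β : Type*} (lamA : α → Bool) (lamB : β → Bool) : α ⊕ β → Bool :=
  Sum.elim (fun a => !(lamA a)) lamB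

/-- The causality order of the tensor game `A ⊗ B` (or of `A ⊸ B`). -/
def tensLe {α β : Type*} (leA : α → α → Prop) (leB : β → β → Prop) :
    α ⊕ β → α ⊕ β → Prop :=
  sumRel leA leB

/-- A strategy on the game `(lam, leG)`: a partial order `les` on moves such
that `m <ₛ n` implies `m` is Opponent and `n` is Proponent (polarity), and the
transitive closure of `les ∪ leG` is still a partial order (acyclicity). -/
def IsStrategy {α : Type*} (lam : α → Bool) (leG : α → α → Prop)
    (les : α → α → Prop) : Prop :=
  (∀ a, les a a) ∧ (∀ a b c, les a b → les b c → les a c) ∧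
  (∀ a b, les a b → les b a → a = b) ∧
  (∀ a b, les a b → a ≠ b → lam a = false ∧ lam b = true) ∧
  (∀ a b, Relation.ReflTransGen (fun x y => les x y ∨ leG x y) a b →
          Relation.ReflTransGen (fun x y => les x y ∨ leG x y) b a → a = b)

/-- Direct image of a relation along a function. -/
def relMap {α β : Type*} (f : α → β) (r : α → α → Prop) : β → β → Prop :=
  fun x y => ∃ a a', r a a' ∧ f a = x ∧ f a' = y

/-- The composite of a strategy `σ` on `A ⊸ B` and a strategy `τ` on `B ⊸ C`:
the restriction to the moves of `A` and `C` of the (reflexive) transitive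
closure of the union of `≤σ` and `≤τ`, both seen as relations on the moves of
`A`, `B` and `C`. -/
def stratComp {α β γ : Type*} (σ : α ⊕ β → α ⊕ β → Prop)
    (τ : β ⊕ γ → β ⊕ γ → Prop) : α ⊕ γ → α ⊕ γ → Prop :=
  fun x y =>
    Relation.ReflTransGen
      (fun u v => relMap (Sum.map id Sum.inl) σ u v ∨ relMap Sum.inr τ u v)
      (Sum.map id Sum.inr x) (Sum.map id Sum.inr y)

/-!
Only the first and the last strict step of an interaction path matter. A path leaving a move
of `A` (of `C`) starts with a `σ`-step (a `τ`-step), and that move has the same polarity in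
`A ⊸ B` (in `B ⊸ C`) as in `A ⊸ C`; dually for the last step. The moves of `B`, whose polarity
flips between the two games, never sit at the ends of the path.
-/

theorem Relation.ReflTransGen.exists_tail_ne {δ : Type*} {r : δ → δ → Prop} {a b : δ}
    (h : Relation.ReflTransGen r a b) (hab : a ≠ b) : ∃ c, r c b ∧ c ≠ b := by
  induction h with
  | refl => exact absurd rfl hab
  | @tail c d _ hcd ih =>
    by_cases hcd' : c = d
    · exact hcd' ▸ ih (hcd' ▸ hab)
    · exact ⟨c, hcd, hcd'⟩

theorem Relation.ReflTransGen.exists_head_ne {δ : Type*} {r : δ → δ → Prop} {a b : δ}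
    (h : Relation.ReflTransGen r a b) (hab : a ≠ b) : ∃ c, r a c ∧ a ≠ c := by
  obtain ⟨c, hc, hcb⟩ := (Relation.reflTransGen_swap.mpr h).exists_tail_ne hab.symm
  exact ⟨c, hc, hcb.symm⟩

def Polarized {δ : Type*} (lam : δ → Bool) (r : δ → δ → Prop) : Prop :=
  ∀ a b, r a b → a ≠ b → lam a = false ∧ lam b = true

theorem IsStrategy.polarized {δ : Type*} {lam : δ → Bool} {leG les : δ → δ → Prop}
    (h : IsStrategy lam leG les) : Polarized lam les :=
  h.2.2.2.1

section Polarized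

variable {δ ε ζ : Type*} {lam : δ → Bool} {lam' : ε → Bool} {r : δ → δ → Prop}

theorem Polarized.source_of_relMap {f : δ → ζ} {g : ε → ζ} (hr : Polarized lam r)
    {x : ε} {u : ζ} (hstep : relMap f r (g x) u) (hne : g x ≠ u)
    (hfg : ∀ m x, f m = g x → lam m = lam' x) : lam' x = false := by
  obtain ⟨m, m', hmm', hm, rfl⟩ := hstep
  rw [← hfg m x hm]
  exact (hr m m' hmm' (by rintro rfl; exact hne hm.symm)).1

theorem Polarized.target_of_relMap {f : δ → ζ} {g : ε → ζ} (hr : Polarized lam r)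
    {y : ε} {u : ζ} (hstep : relMap f r u (g y)) (hne : u ≠ g y)
    (hfg : ∀ m y, f m = g y → lam m = lam' y) : lam' y = true := by
  obtain ⟨m, m', hmm', rfl, hm'⟩ := hstep
  rw [← hfg m' y hm']
  exact (hr m m' hmm' (by rintro rfl; exact hne hm')).2

theorem polarized_reflTransGen_comap {s : ζ → ζ → Prop} {g : ε → ζ} (hg : g.Injective)
    (hsource : ∀ x u, s (g x) u → g x ≠ u → lam' x = false)
    (htarget : ∀ u y, s u (g y) → u ≠ g y → lam' y = true) :
    Polarized lam' (fun x y => Relation.ReflTransGen s (g x) (g y)) := by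
  intro x y hxy hne
  have hne' : g x ≠ g y := hg.ne hne
  obtain ⟨u, hxu, hxu'⟩ := hxy.exists_head_ne hne'
  obtain ⟨v, hvy, hvy'⟩ := hxy.exists_tail_ne hne'
  exact ⟨hsource x u hxu hxu', htarget v y hvy hvy'⟩

end Polarized

section Composition

variable {α β γ : Type*} {lamA : α → Bool} {lamB : β → Bool} {lamC : γ → Bool}

theorem arrowPol_eq_of_map_inl_eq_map_inr {m : α ⊕ β} {x : α ⊕ γ}
    (h : Sum.map id Sum.inl m = Sum.map id Sum.inr x) :
    arrowPol lamA lamB m = arrowPol lamA lamC x := by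
  cases m <;> cases x <;> simp_all [arrowPol]

theorem arrowPol_eq_of_inr_eq_map_inr {m : β ⊕ γ} {x : α ⊕ γ}
    (h : Sum.inr m = Sum.map id Sum.inr x) :
    arrowPol lamB lamC m = arrowPol lamA lamC x := by
  cases m <;> cases x <;> simp_all [arrowPol]

theorem polarized_stratComp {σ : α ⊕ β → α ⊕ β → Prop} {τ : β ⊕ γ → β ⊕ γ → Prop}
    (hσ : Polarized (arrowPol lamA lamB) σ) (hτ : Polarized (arrowPol lamB lamC) τ) :
    Polarized (arrowPol lamA lamC) (stratComp σ τ) := by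
  refine polarized_reflTransGen_comap
    (Function.injective_id.sumMap Sum.inr_injective) ?_ ?_
  · rintro x u (hstep | hstep) hne
    · exact hσ.source_of_relMap hstep hne fun _ _ => arrowPol_eq_of_map_inl_eq_map_inr
    · exact hτ.source_of_relMap hstep hne fun _ _ => arrowPol_eq_of_inr_eq_map_inr
  · rintro u y (hstep | hstep) hne
    · exact hσ.target_of_relMap hstep hne fun _ _ => arrowPol_eq_of_map_inl_eq_map_inr
    · exact hτ.target_of_relMap hstep hne fun _ _ => arrowPol_eq_of_inr_eq_map_inr

end Composition

theorem stratComp_polarity_general {α β γ : Type*}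
    (lamA : α → Bool) (lamB : β → Bool) (lamC : γ → Bool)
    (leA : α → α → Prop) (leB : β → β → Prop) (leC : γ → γ → Prop)
    (σ : α ⊕ β → α ⊕ β → Prop) (τ : β ⊕ γ → β ⊕ γ → Prop)
    (hσ : IsStrategy (arrowPol lamA lamB) (tensLe leA leB) σ)
    (hτ : IsStrategy (arrowPol lamB lamC) (tensLe leB leC) τ) :
    ∀ x y : α ⊕ γ, stratComp σ τ x y → x ≠ y →
      arrowPol lamA lamC x = false ∧ arrowPol lamA lamC y = true :=
  polarized_stratComp hσ.polarized hτ.polarized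

/-- Composing two strategies preserves the polarity condition: whenever
`m < n` in the composite (with `m ≠ n`), `m` is an Opponent move and `n` a
Proponent move of `A ⊸ C`. -/
theorem stratComp_polarity {α β γ : Type*}
    (lamA : α → Bool) (lamB : β → Bool) (lamC : γ → Bool)
    (leA : α → α → Prop) (leB : β → β → Prop) (leC : γ → γ → Prop)
    (hA : IsGame leA) (hB : IsGame leB) (hC : IsGame leC)
    (σ : α ⊕ β → α ⊕ β → Prop) (τ : β ⊕ γ → β ⊕ γ → Prop)
    (hσ : IsStrategy (arrowPol lamA lamB) (tensLe leA leB) σ)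
    (hτ : IsStrategy (arrowPol lamB lamC) (tensLe leB leC) τ) :
    ∀ x y : α ⊕ γ, stratComp σ τ x y → x ≠ y →
      arrowPol lamA lamC x = false ∧ arrowPol lamA lamC y = true :=
  stratComp_polarity_general lamA lamB lamC leA leB leC σ τ hσ hτ
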